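/- arXiv:1205.3682 — 4 statements merged into one kernel-verified Lean document; each statement's English description precedes it below -/
import Mathlib

section
/- Let G be a ℂ-submodule of (m × n → ℂ) and ρA a fixed matrix such that trB |ψ⟩⟨ψ| = ρA for every unit vector ψ ∈ G. Then for any two orthogonal vectors ψ1, ψ2 ∈ G and any matrix M : Matrix m m ℂ, one has ⟨ψ1, (M ⊗ I) ψ2⟩ = 0, i.e., ∑_{(i,j)} conj (ψ1 (i,j)) * (∑ i', M i i' * ψ2 (i', j)) = 0. -/
/-
The map `(u, v) ↦ trB |u⟩⟨v| - ⟨v, u⟩ • ρA` is sesquilinear, and since both of its terms scale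
by `|c|²` under `w ↦ c • w`, the hypothesis on unit vectors makes it vanish on the diagonal of `G`.
Over `ℂ` a sesquilinear form vanishing on the diagonal vanishes identically (polarize with `x + y`
and `x + I • y`). Hence `trB |ψ2⟩⟨ψ1| = ⟨ψ1, ψ2⟩ • ρA = 0`, and the matrix element in question is
`tr (M * trB |ψ2⟩⟨ψ1|)`.
-/

open scoped ComplexOrder

noncomputable section

/-- Partial trace over the second factor. -/
def trB {m n : Type*} [Fintype n] (ρ : Matrix (m × n) (m × n) ℂ) : Matrix m m ℂ :=
  Matrix.of fun i i' => ∑ j, ρ (i, j) (i', j)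

/-- Partial trace over the first factor. -/
def trA {m n : Type*} [Fintype m] (ρ : Matrix (m × n) (m × n) ℂ) : Matrix n n ℂ :=
  Matrix.of fun j j' => ∑ i, ρ (i, j) (i, j')

/-- The outer product `|ψ⟩⟨φ|`. -/
def outer {k : Type*} (ψ φ : k → ℂ) : Matrix k k ℂ :=
  Matrix.of fun x y => ψ x * (starRingEnd ℂ) (φ y)

/-- A density matrix: positive semidefinite with trace one. -/
def IsDensity {k : Type*} [Fintype k] (ρ : Matrix k k ℂ) : Prop :=
  ρ.PosSemidef ∧ ρ.trace = 1

/-- `P` is the matrix of the orthogonal projection onto the submodule `S`. -/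
def IsOrthProjOnto {k : Type*} [Fintype k] (S : Submodule ℂ (k → ℂ)) (P : Matrix k k ℂ) : Prop :=
  P.IsHermitian ∧ P * P = P ∧ (∀ x, P.mulVec x ∈ S) ∧ ∀ y ∈ S, P.mulVec y = y

/-- `T` is supported on `S`: `P * T * P = T` for the orthogonal projection `P` onto `S`. -/
def SupportedOn {k : Type*} [Fintype k] (S : Submodule ℂ (k → ℂ)) (T : Matrix k k ℂ) : Prop :=
  ∃ P, IsOrthProjOnto S P ∧ P * T * P = T

/-- The set of reduced density matrices on the first factor. -/
def DB {m n : Type*} [Fintype m] [Fintype n] (S : Submodule ℂ (m × n → ℂ)) :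
    Set (Matrix m m ℂ) :=
  {σ | ∃ ρ, IsDensity ρ ∧ SupportedOn S ρ ∧ trB ρ = σ}

theorem LinearMap.IsAlt.eq_zero {M N : Type*} [AddCommGroup M] [Module ℂ M] [AddCommGroup N]
    [Module ℂ N] {B : M →ₗ[ℂ] M →ₗ⋆[ℂ] N} (hB : B.IsAlt) (x y : M) : B x y = 0 := by
  have h := hB.neg x (Complex.I • y)
  rw [map_smulₛₗ, LinearMap.map_smul₂, Complex.conj_I, ← hB.neg x y, neg_smul, neg_neg, smul_neg,
    eq_neg_iff_add_eq_zero, ← two_smul ℂ, smul_smul, smul_eq_zero] at h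
  exact h.resolve_left (by simp)

section PartialTrace

variable {m n : Type*} [Fintype m] [Fintype n]

def trBOuterDefect (ρA : Matrix m m ℂ) : (m × n → ℂ) →ₗ[ℂ] (m × n → ℂ) →ₗ⋆[ℂ] Matrix m m ℂ :=
  LinearMap.mk₂'ₛₗ (RingHom.id ℂ) (starRingEnd ℂ)
    (fun u v => trB (outer u v) - (star v ⬝ᵥ u) • ρA)
    (fun u u' v => by ext; simp [trB, outer, add_mul, Finset.sum_add_distrib, add_smul]; ring)
    (fun c u v => by ext; simp [trB, outer, mul_assoc, Finset.mul_sum, mul_sub])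
    (fun u v v' => by ext; simp [trB, outer, mul_add, Finset.sum_add_distrib, add_smul]; ring)
    (fun c v u => by ext; simp [trB, outer, Finset.mul_sum, mul_sub, mul_left_comm, mul_assoc])

lemma trBOuterDefect_apply (ρA : Matrix m m ℂ) (u v : m × n → ℂ) :
    trBOuterDefect ρA u v = trB (outer u v) - (star v ⬝ᵥ u) • ρA :=
  rfl

lemma star_dotProduct_self_eq_sum_norm_sq {k : Type*} [Fintype k] (v : k → ℂ) :
    star v ⬝ᵥ v = ((∑ x, ‖v x‖ ^ 2 : ℝ) : ℂ) := by
  simp [dotProduct, Complex.conj_mul']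

lemma exists_smul_sum_norm_sq_eq_one {k : Type*} [Fintype k] {w : k → ℂ} (hw : w ≠ 0) :
    ∃ c : ℂ, c ≠ 0 ∧ ∑ x, ‖(c • w) x‖ ^ 2 = 1 := by
  obtain ⟨x, rfl⟩ : ∃ x : EuclideanSpace ℂ k, x.ofLp = w := ⟨WithLp.toLp 2 w, rfl⟩
  have hx : x ≠ 0 := by rintro rfl; exact hw rfl
  have hunit := norm_smul_inv_norm (𝕜 := ℂ) hx
  refine ⟨_, ?_, (EuclideanSpace.norm_sq_eq _).symm.trans (by rw [hunit, one_pow])⟩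
  simpa using hx

lemma trBOuterDefect_self_eq_zero {G : Submodule ℂ (m × n → ℂ)} {ρA : Matrix m m ℂ}
    (hG : ∀ ψ : m × n → ℂ, ψ ∈ G → (∑ x, ‖ψ x‖ ^ 2) = 1 → trB (outer ψ ψ) = ρA)
    {w : m × n → ℂ} (hw : w ∈ G) : trBOuterDefect ρA w w = 0 := by
  rcases eq_or_ne w 0 with rfl | hw0
  · simp
  obtain ⟨c, hc, hunit⟩ := exists_smul_sum_norm_sq_eq_one hw0
  have hcw : trBOuterDefect ρA (c • w) (c • w) = 0 := by
    rw [trBOuterDefect_apply, hG _ (G.smul_mem c hw) hunit, star_dotProduct_self_eq_sum_norm_sq,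
      hunit, Complex.ofReal_one, one_smul, sub_self]
  rw [map_smulₛₗ, LinearMap.map_smul₂, smul_smul, smul_eq_zero] at hcw
  exact hcw.resolve_left (by simpa using hc)

lemma trB_outer_eq_smul_of_mem {G : Submodule ℂ (m × n → ℂ)} {ρA : Matrix m m ℂ}
    (hG : ∀ ψ : m × n → ℂ, ψ ∈ G → (∑ x, ‖ψ x‖ ^ 2) = 1 → trB (outer ψ ψ) = ρA)
    {u v : m × n → ℂ} (hu : u ∈ G) (hv : v ∈ G) :
    trB (outer u v) = (star v ⬝ᵥ u) • ρA := by
  have hAlt : ((trBOuterDefect ρA).domRestrict₁₂ G G).IsAlt := fun w =>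
    trBOuterDefect_self_eq_zero hG w.2
  rw [← sub_eq_zero, ← trBOuterDefect_apply]
  exact hAlt.eq_zero ⟨u, hu⟩ ⟨v, hv⟩

lemma sum_conj_mul_local_apply_eq_trace (M : Matrix m m ℂ) (ψ1 ψ2 : m × n → ℂ) :
    ∑ p : m × n, (starRingEnd ℂ) (ψ1 p) * (∑ i', M p.1 i' * ψ2 (i', p.2)) =
      (M * trB (outer ψ2 ψ1)).trace := by
  simp only [Matrix.trace, Matrix.diag, Matrix.mul_apply, trB, outer, Matrix.of_apply,
    Fintype.sum_prod_type, Finset.mul_sum]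
  rw [Finset.sum_congr rfl fun i _ => Finset.sum_comm]
  simp only [mul_assoc, mul_comm]

end PartialTrace

theorem local_operator_matrix_element_vanishes_general
    {m n : Type*} [Fintype m] [Fintype n]
    (G : Submodule ℂ (m × n → ℂ)) (ρA : Matrix m m ℂ)
    (hG : ∀ ψ : m × n → ℂ, ψ ∈ G → (∑ x, ‖ψ x‖ ^ 2) = 1 → trB (outer ψ ψ) = ρA)
    (ψ1 ψ2 : m × n → ℂ) (h1 : ψ1 ∈ G) (h2 : ψ2 ∈ G)
    (horth : ∑ x, (starRingEnd ℂ) (ψ1 x) * ψ2 x = 0)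
    (M : Matrix m m ℂ) :
    ∑ p : m × n, (starRingEnd ℂ) (ψ1 p) * (∑ i', M p.1 i' * ψ2 (i', p.2)) = 0 := by
  have hinner : star ψ1 ⬝ᵥ ψ2 = 0 := horth
  rw [sum_conj_mul_local_apply_eq_trace, trB_outer_eq_smul_of_mem hG h2 h1, hinner, zero_smul,
    Matrix.mul_zero, Matrix.trace_zero]

theorem local_operator_matrix_element_vanishes
    {m n : Type*} [Fintype m] [Fintype n] [DecidableEq m] [DecidableEq n]
    (G : Submodule ℂ (m × n → ℂ)) (ρA : Matrix m m ℂ)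
    (hG : ∀ ψ : m × n → ℂ, ψ ∈ G → (∑ x, ‖ψ x‖ ^ 2) = 1 → trB (outer ψ ψ) = ρA)
    (ψ1 ψ2 : m × n → ℂ) (h1 : ψ1 ∈ G) (h2 : ψ2 ∈ G)
    (horth : ∑ x, (starRingEnd ℂ) (ψ1 x) * ψ2 x = 0)
    (M : Matrix m m ℂ) :
    ∑ p : m × n, (starRingEnd ℂ) (ψ1 p) * (∑ i', M p.1 i' * ψ2 (i', p.2)) = 0 :=
  local_operator_matrix_element_vanishes_general G ρA hG ψ1 ψ2 h1 h2 horth M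

end
end

section
/- Let S be a ℂ-submodule of (m × n → ℂ) and let ψ1, ψ2 ∈ S be orthogonal unit vectors with trB |ψ1⟩⟨ψ1| = trB |ψ2⟩⟨ψ2| = ρA. If ρA is an extreme point (over ℝ) of D_B(S) = {trB ρ | ρ a density matrix supported on S}, then trB |ψ⟩⟨ψ| = ρA for every unit vector ψ in the ℂ-span of {ψ1, ψ2}. -/
open scoped ComplexOrder

noncomputable section

/-!
Write `ψ = a • ψ1 + b • ψ2`. Since `ψ1 ⟂ ψ2`, the reflected vector `ψ' = a • ψ1 - b • ψ2` is again
a unit vector of `S`, and in `trB |ψ⟩⟨ψ| + trB |ψ'⟩⟨ψ'|` the cross terms cancel, leaving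
`2 (|a|² + |b|²) ρA = 2 ρA`. Thus `ρA` is the midpoint of two points of `DB S`, and extremality
forces `trB |ψ⟩⟨ψ| = ρA`.
-/

open Matrix
open scoped InnerProductSpace

section Extreme

variable {𝕜 E : Type*} [Ring 𝕜] [LinearOrder 𝕜] [IsStrictOrderedRing 𝕜] [Invertible (2 : 𝕜)]
  [AddCommGroup E] [Module 𝕜 E]

lemma eq_of_mem_extremePoints_of_add_eq {A : Set E} {x y z : E} (hx : x ∈ A.extremePoints 𝕜)
    (hy : y ∈ A) (hz : z ∈ A) (hyz : y + z = x + x) : y = x := by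
  have hz' : x - (y - x) = z := by rw [eq_sub_of_add_eq' hyz]; abel
  have := hx.2 (by rwa [add_sub_cancel]) (by rwa [hz']) (mem_openSegment_add_sub x (y - x))
  rwa [add_sub_cancel] at this

end Extreme

lemma norm_smul_add_smul_sq {𝕜 E : Type*} [RCLike 𝕜] [NormedAddCommGroup E]
    [InnerProductSpace 𝕜 E] {x y : E} (hx : ‖x‖ = 1) (hy : ‖y‖ = 1) (hxy : ⟪x, y⟫_𝕜 = 0)
    (a b : 𝕜) : ‖a • x + b • y‖ ^ 2 = ‖a‖ ^ 2 + ‖b‖ ^ 2 := by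
  have h := norm_add_sq_eq_norm_sq_add_norm_sq_of_inner_eq_zero (a • x) (b • y)
    (by rw [inner_smul_left, inner_smul_right, hxy, mul_zero, mul_zero])
  rw [← sq, ← sq, ← sq, norm_smul, norm_smul, hx, hy] at h
  simpa using h

section Coordinates

variable {k : Type*} [Fintype k]

lemma sum_norm_sq_eq_norm_toLp_sq (φ : k → ℂ) :
    ∑ x, ‖φ x‖ ^ 2 = ‖WithLp.toLp 2 φ‖ ^ 2 :=
  (EuclideanSpace.norm_sq_eq _).symm

lemma sum_conj_mul_eq_inner_toLp (φ χ : k → ℂ) :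
    ∑ x, starRingEnd ℂ (φ x) * χ x = ⟪WithLp.toLp 2 φ, WithLp.toLp 2 χ⟫_ℂ := by
  simp [PiLp.inner_apply, mul_comm]

lemma sum_norm_sq_smul_add_smul {ψ1 ψ2 : k → ℂ}
    (hu1 : ∑ x, ‖ψ1 x‖ ^ 2 = 1) (hu2 : ∑ x, ‖ψ2 x‖ ^ 2 = 1)
    (horth : ∑ x, starRingEnd ℂ (ψ1 x) * ψ2 x = 0) (a b : ℂ) :
    ∑ x, ‖(a • ψ1 + b • ψ2) x‖ ^ 2 = ‖a‖ ^ 2 + ‖b‖ ^ 2 := by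
  rw [sum_norm_sq_eq_norm_toLp_sq] at hu1 hu2 ⊢
  rw [sum_conj_mul_eq_inner_toLp] at horth
  rw [WithLp.toLp_add, WithLp.toLp_smul, WithLp.toLp_smul]
  exact norm_smul_add_smul_sq ((pow_eq_one_iff_of_nonneg (norm_nonneg _) two_ne_zero).mp hu1)
    ((pow_eq_one_iff_of_nonneg (norm_nonneg _) two_ne_zero).mp hu2) horth a b

end Coordinates

section PartialTrace

variable {m n : Type*} [Fintype n]

lemma trB_add (ρ σ : Matrix (m × n) (m × n) ℂ) : trB (ρ + σ) = trB ρ + trB σ := by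
  ext i i'
  simp [trB, Finset.sum_add_distrib]

lemma trB_smul (c : ℂ) (ρ : Matrix (m × n) (m × n) ℂ) : trB (c • ρ) = c • trB ρ := by
  ext i i'
  simp [trB, Finset.mul_sum]

end PartialTrace

section Outer

variable {k : Type*}

lemma outer_eq_vecMulVec (ψ φ : k → ℂ) : outer ψ φ = vecMulVec ψ (star φ) := rfl

lemma outer_smul_self (a : ℂ) (φ : k → ℂ) :
    outer (a • φ) (a • φ) = ((‖a‖ ^ 2 : ℝ) : ℂ) • outer φ φ := by
  ext x y
  simp only [outer, of_apply, Matrix.smul_apply, Pi.smul_apply, smul_eq_mul, map_mul]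
  rw [Complex.ofReal_pow, ← Complex.mul_conj']
  ring

lemma outer_add_add_outer_sub (u v : k → ℂ) :
    outer (u + v) (u + v) + outer (u - v) (u - v) = (2 : ℂ) • (outer u u + outer v v) := by
  ext x y
  simp only [outer, of_apply, Matrix.add_apply, Matrix.smul_apply, Pi.add_apply, Pi.sub_apply,
    map_add, map_sub, smul_eq_mul]
  ring

variable [Fintype k]

lemma isDensity_outer_self {φ : k → ℂ} (hφ : ∑ x, ‖φ x‖ ^ 2 = 1) : IsDensity (outer φ φ) := by
  refine ⟨posSemidef_vecMulVec_self_star φ, ?_⟩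
  rw [outer_eq_vecMulVec, trace_vecMulVec, dotProduct]
  simp only [Pi.star_apply, Complex.star_def, Complex.mul_conj']
  exact_mod_cast hφ

lemma exists_isOrthProjOnto (S : Submodule ℂ (k → ℂ)) : ∃ P, IsOrthProjOnto S P := by
  classical
  let K : Submodule ℂ (EuclideanSpace ℂ k) := S.comap (WithLp.linearEquiv 2 ℂ (k → ℂ)).toLinearMap
  let P : Matrix k k ℂ := toEuclideanLin.symm K.starProjection
  have hP : ∀ x, P *ᵥ x = (K.starProjection (WithLp.toLp 2 x)).ofLp := fun x => by
    change (toEuclideanLin P (WithLp.toLp 2 x)).ofLp = _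
    rw [LinearEquiv.apply_symm_apply]
    rfl
  have hmem : ∀ x, P *ᵥ x ∈ S := fun x => by rw [hP]; exact K.starProjection_apply_mem _
  have hfix : ∀ y ∈ S, P *ᵥ y = y := fun y hy => by
    rw [hP, K.starProjection_eq_self_iff.mpr hy]
  refine ⟨P, ?_, ?_, hmem, hfix⟩
  · rw [← isSymmetric_toEuclideanLin_iff, LinearEquiv.apply_symm_apply]
    exact K.starProjection_isSymmetric
  · exact ext_of_mulVec_single fun i => by rw [← mulVec_mulVec, hfix _ (hmem _)]

lemma supportedOn_outer_self {S : Submodule ℂ (k → ℂ)} {φ : k → ℂ} (hφ : φ ∈ S) :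
    SupportedOn S (outer φ φ) := by
  obtain ⟨P, hP⟩ := exists_isOrthProjOnto S
  have hPφ : P *ᵥ φ = φ := hP.2.2.2 φ hφ
  refine ⟨P, hP, ?_⟩
  rw [outer_eq_vecMulVec, mul_vecMulVec, vecMulVec_mul, hPφ, ← hP.1.eq, ← star_mulVec, hPφ]

end Outer

lemma trB_outer_self_mem_DB {m n : Type*} [Fintype m] [Fintype n] {S : Submodule ℂ (m × n → ℂ)}
    {φ : m × n → ℂ} (hφ : φ ∈ S) (hu : ∑ x, ‖φ x‖ ^ 2 = 1) : trB (outer φ φ) ∈ DB S :=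
  ⟨outer φ φ, isDensity_outer_self hu, supportedOn_outer_self hφ, rfl⟩

theorem span_of_preimages_maps_to_extreme_point_general
    {m n : Type*} [Fintype m] [Fintype n]
    (S : Submodule ℂ (m × n → ℂ)) (ρA : Matrix m m ℂ)
    (ψ1 ψ2 : m × n → ℂ) (h1 : ψ1 ∈ S) (h2 : ψ2 ∈ S)
    (hu1 : (∑ x, ‖ψ1 x‖ ^ 2) = 1) (hu2 : (∑ x, ‖ψ2 x‖ ^ 2) = 1)
    (horth : ∑ x, (starRingEnd ℂ) (ψ1 x) * ψ2 x = 0)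
    (hρ1 : trB (outer ψ1 ψ1) = ρA) (hρ2 : trB (outer ψ2 ψ2) = ρA)
    (hext : ρA ∈ Set.extremePoints ℝ (DB S)) :
    ∀ ψ : m × n → ℂ, ψ ∈ Submodule.span ℂ ({ψ1, ψ2} : Set (m × n → ℂ)) →
      (∑ x, ‖ψ x‖ ^ 2) = 1 → trB (outer ψ ψ) = ρA := by
  intro ψ hψ hunit
  obtain ⟨a, b, rfl⟩ := Submodule.mem_span_pair.mp hψ
  have hab : ‖a‖ ^ 2 + ‖b‖ ^ 2 = 1 := by
    rw [← hunit, sum_norm_sq_smul_add_smul hu1 hu2 horth]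
  have hmem : ∀ c : ℂ, ‖c‖ = ‖b‖ → trB (outer (a • ψ1 + c • ψ2) (a • ψ1 + c • ψ2)) ∈ DB S :=
    fun c hc => trB_outer_self_mem_DB (S.add_mem (S.smul_mem a h1) (S.smul_mem c h2))
      (by rw [sum_norm_sq_smul_add_smul hu1 hu2 horth, hc, hab])
  refine eq_of_mem_extremePoints_of_add_eq hext (hmem b rfl) (hmem (-b) (norm_neg b)) ?_
  calc _ = trB (outer (a • ψ1 + b • ψ2) (a • ψ1 + b • ψ2)
          + outer (a • ψ1 - b • ψ2) (a • ψ1 - b • ψ2)) := by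
        rw [trB_add, neg_smul, ← sub_eq_add_neg]
    _ = (2 : ℂ) • (((‖a‖ ^ 2 + ‖b‖ ^ 2 : ℝ) : ℂ) • ρA) := by
        rw [outer_add_add_outer_sub, trB_smul, trB_add, outer_smul_self, outer_smul_self, trB_smul,
          trB_smul, hρ1, hρ2, Complex.ofReal_add, add_smul]
    _ = ρA + ρA := by rw [hab, Complex.ofReal_one, one_smul, two_smul]

theorem span_of_preimages_maps_to_extreme_point
    {m n : Type*} [Fintype m] [Fintype n] [DecidableEq m] [DecidableEq n]
    (S : Submodule ℂ (m × n → ℂ)) (ρA : Matrix m m ℂ)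
    (ψ1 ψ2 : m × n → ℂ) (h1 : ψ1 ∈ S) (h2 : ψ2 ∈ S)
    (hu1 : (∑ x, ‖ψ1 x‖ ^ 2) = 1) (hu2 : (∑ x, ‖ψ2 x‖ ^ 2) = 1)
    (horth : ∑ x, (starRingEnd ℂ) (ψ1 x) * ψ2 x = 0)
    (hρ1 : trB (outer ψ1 ψ1) = ρA) (hρ2 : trB (outer ψ2 ψ2) = ρA)
    (hext : ρA ∈ Set.extremePoints ℝ (DB S)) :
    ∀ ψ : m × n → ℂ, ψ ∈ Submodule.span ℂ ({ψ1, ψ2} : Set (m × n → ℂ)) →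
      (∑ x, ‖ψ x‖ ^ 2) = 1 → trB (outer ψ ψ) = ρA :=
  span_of_preimages_maps_to_extreme_point_general S ρA ψ1 ψ2 h1 h2 hu1 hu2 horth hρ1 hρ2 hext

end
end

section
/- Let G be a ℂ-submodule of (m × n → ℂ) and ρA a fixed matrix such that trB |ψ⟩⟨ψ| = ρA for every unit vector ψ ∈ G. Then for any two orthogonal unit vectors ψj, ψk ∈ G, the reduced density matrices on the second factor have orthogonal ranges: (trA |ψj⟩⟨ψj|) * (trA |ψk⟩⟨ψk|) = 0. -/
/-!
Writing `Ψ : Matrix m n ℂ` for the coefficients of `ψ`, one has `trB |ψ⟩⟨φ| = Ψ Φᴴ` and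
`trA |ψ⟩⟨φ| = (Φᴴ Ψ)ᵀ`, so `trA |ψj⟩⟨ψj| * trA |ψk⟩⟨ψk| = (Ψkᴴ (Ψk Ψjᴴ) Ψj)ᵀ` vanishes as soon as
`trB |ψk⟩⟨ψj| = 0`. The latter holds because the hypothesis forces the sesquilinear map
`(ψ, φ) ↦ trB |ψ⟩⟨φ|` to equal `(ψ, φ) ↦ ⟨φ, ψ⟩ ρA` on `G`: by homogeneity on the diagonal of `G`,
and then on all of `G` by complex polarization.
-/

open scoped ComplexOrder

noncomputable section

theorem LinearMap.apply_eq_zero_of_forall_mem_apply_self_eq_zero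
    {V N : Type*} [AddCommGroup V] [Module ℂ V] [AddCommGroup N] [Module ℂ N]
    (B : V →ₗ[ℂ] V →ₗ⋆[ℂ] N) {G : Submodule ℂ V} (hB : ∀ x ∈ G, B x x = 0)
    {x y : V} (hx : x ∈ G) (hy : y ∈ G) : B x y = 0 := by
  have hplus := hB _ (G.add_mem hx hy)
  have htwist := hB _ (G.add_mem hx (G.smul_mem Complex.I hy))
  simp only [map_add, map_smul, map_smulₛₗ, LinearMap.add_apply, LinearMap.smul_apply,
    Complex.conj_I, hB x hx, hB y hy, smul_zero, zero_add, add_zero] at hplus htwist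
  have hswap : B y x = B x y := by
    rw [neg_smul, ← sub_eq_add_neg, ← smul_sub, smul_eq_zero] at htwist
    exact sub_eq_zero.mp (htwist.resolve_left Complex.I_ne_zero)
  rw [hswap, ← two_smul ℂ] at hplus
  exact (smul_eq_zero.mp hplus).resolve_left two_ne_zero

theorem sum_mul_conj_eq_sum_norm_sq {k : Type*} [Fintype k] (ψ : k → ℂ) :
    ∑ x, ψ x * starRingEnd ℂ (ψ x) = ((∑ x, ‖ψ x‖ ^ 2 : ℝ) : ℂ) := by
  push_cast
  exact Finset.sum_congr rfl fun x _ => Complex.mul_conj' (ψ x)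

open scoped Matrix

def coeffMatrix {m n : Type*} (ψ : m × n → ℂ) : Matrix m n ℂ :=
  Matrix.of fun i j => ψ (i, j)

section
variable {m n : Type*}

theorem trB_outer [Fintype n] (ψ φ : m × n → ℂ) :
    trB (outer ψ φ) = coeffMatrix ψ * (coeffMatrix φ)ᴴ := by
  ext i i'
  simp [trB, outer, coeffMatrix, Matrix.mul_apply]

theorem trA_outer [Fintype m] (ψ φ : m × n → ℂ) :
    trA (outer ψ φ) = ((coeffMatrix φ)ᴴ * coeffMatrix ψ)ᵀ := by
  ext j j'
  simp [trA, outer, coeffMatrix, Matrix.mul_apply, mul_comm]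

theorem trA_outer_mul_trA_outer [Fintype m] [Fintype n] (ψ φ χ ω : m × n → ℂ) :
    trA (outer ψ φ) * trA (outer χ ω) =
      ((coeffMatrix ω)ᴴ * trB (outer χ φ) * coeffMatrix ψ)ᵀ := by
  simp only [trA_outer, trB_outer, ← Matrix.transpose_mul, Matrix.mul_assoc]

variable [Fintype m] [Fintype n]

def trBOuterSubInnerSmul (ρ : Matrix m m ℂ) :
    (m × n → ℂ) →ₗ[ℂ] (m × n → ℂ) →ₗ⋆[ℂ] Matrix m m ℂ :=
  LinearMap.mk₂'ₛₗ (RingHom.id ℂ) (starRingEnd ℂ)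
    (fun ψ φ => trB (outer ψ φ) - (∑ x, ψ x * starRingEnd ℂ (φ x)) • ρ)
    (by intros; ext; simp [trB, outer, add_mul, Finset.sum_add_distrib, add_smul, sub_add_sub_comm])
    (by intros; ext; simp [trB, outer, mul_assoc, ← Finset.mul_sum, mul_sub])
    (by intros; ext; simp [trB, outer, mul_add, Finset.sum_add_distrib, add_smul, sub_add_sub_comm])
    (by intros; ext; simp [trB, outer, mul_left_comm _ (starRingEnd ℂ _), ← Finset.mul_sum, mul_sub,
      mul_assoc])

theorem trBOuterSubInnerSmul_apply (ρ : Matrix m m ℂ) (ψ φ : m × n → ℂ) :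
    trBOuterSubInnerSmul ρ ψ φ = trB (outer ψ φ) - (∑ x, ψ x * starRingEnd ℂ (φ x)) • ρ :=
  rfl

theorem trBOuterSubInnerSmul_apply_self_eq_zero {G : Submodule ℂ (m × n → ℂ)} {ρ : Matrix m m ℂ}
    (hG : ∀ ψ : m × n → ℂ, ψ ∈ G → (∑ x, ‖ψ x‖ ^ 2) = 1 → trB (outer ψ ψ) = ρ)
    {ψ : m × n → ℂ} (hψ : ψ ∈ G) : trBOuterSubInnerSmul ρ ψ ψ = 0 := by
  set s := ∑ x, ‖ψ x‖ ^ 2 with hs_def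
  rcases eq_or_ne s 0 with hs | hs
  · have hψ0 : ψ = 0 := by
      funext x
      simpa using (Finset.sum_eq_zero_iff_of_nonneg fun _ _ => by positivity).mp hs x
        (Finset.mem_univ x)
    simp [hψ0]
  set t : ℂ := (((√s)⁻¹ : ℝ) : ℂ)
  have hspos : 0 < s := lt_of_le_of_ne (by positivity) hs.symm
  have hunit : ∑ x, ‖(t • ψ) x‖ ^ 2 = 1 := by
    simp only [Pi.smul_apply, norm_smul, mul_pow, ← Finset.mul_sum, ← hs_def, t,
      Complex.norm_real, Real.norm_eq_abs, sq_abs, inv_pow, Real.sq_sqrt hspos.le]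
    exact inv_mul_cancel₀ hs
  have hscaled : trBOuterSubInnerSmul ρ (t • ψ) (t • ψ) = 0 := by
    rw [trBOuterSubInnerSmul_apply, hG _ (G.smul_mem t hψ) hunit, sum_mul_conj_eq_sum_norm_sq,
      hunit]
    simp
  have ht : t ≠ 0 := by simp [t, Real.sqrt_ne_zero'.mpr hspos]
  simpa [map_smulₛₗ, smul_smul, ht] using hscaled

theorem trB_outer_eq_smul_of_mem_s4 {G : Submodule ℂ (m × n → ℂ)} {ρ : Matrix m m ℂ}
    (hG : ∀ ψ : m × n → ℂ, ψ ∈ G → (∑ x, ‖ψ x‖ ^ 2) = 1 → trB (outer ψ ψ) = ρ)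
    {ψ φ : m × n → ℂ} (hψ : ψ ∈ G) (hφ : φ ∈ G) :
    trB (outer ψ φ) = (∑ x, ψ x * starRingEnd ℂ (φ x)) • ρ :=
  sub_eq_zero.mp <| (trBOuterSubInnerSmul ρ).apply_eq_zero_of_forall_mem_apply_self_eq_zero
    (fun _ h => trBOuterSubInnerSmul_apply_self_eq_zero hG h) hψ hφ

end

theorem complementary_rdms_orthogonal_ranges_general
    {m n : Type*} [Fintype m] [Fintype n]
    (G : Submodule ℂ (m × n → ℂ)) (ρA : Matrix m m ℂ)
    (hG : ∀ ψ : m × n → ℂ, ψ ∈ G → (∑ x, ‖ψ x‖ ^ 2) = 1 → trB (outer ψ ψ) = ρA)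
    (ψj ψk : m × n → ℂ) (hj : ψj ∈ G) (hk : ψk ∈ G)
    (horth : ∑ x, (starRingEnd ℂ) (ψj x) * ψk x = 0) :
    trA (outer ψj ψj) * trA (outer ψk ψk) = 0 := by
  have hcross : trB (outer ψk ψj) = 0 := by
    rw [trB_outer_eq_smul_of_mem_s4 hG hk hj, Finset.sum_congr rfl fun x _ => mul_comm _ _, horth,
      zero_smul]
  simp [trA_outer_mul_trA_outer, hcross]

theorem complementary_rdms_orthogonal_ranges
    {m n : Type*} [Fintype m] [Fintype n] [DecidableEq m] [DecidableEq n]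
    (G : Submodule ℂ (m × n → ℂ)) (ρA : Matrix m m ℂ)
    (hG : ∀ ψ : m × n → ℂ, ψ ∈ G → (∑ x, ‖ψ x‖ ^ 2) = 1 → trB (outer ψ ψ) = ρA)
    (ψj ψk : m × n → ℂ) (hj : ψj ∈ G) (hk : ψk ∈ G)
    (huj : (∑ x, ‖ψj x‖ ^ 2) = 1) (huk : (∑ x, ‖ψk x‖ ^ 2) = 1)
    (horth : ∑ x, (starRingEnd ℂ) (ψj x) * ψk x = 0) :
    trA (outer ψj ψj) * trA (outer ψk ψk) = 0 :=
  complementary_rdms_orthogonal_ranges_general G ρA hG ψj ψk hj hk horth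

end
end

section
/- Let Y : Matrix β β ℂ and X : Matrix γ γ ℂ be positive definite, let B : Matrix β γ ℂ be arbitrary, and let C : Matrix γ γ ℂ be Hermitian. Then there exists t > 0 such that the block matrix fromBlocks Y B Bᴴ (t • X + C) is positive semidefinite. -/
/-!
By the Schur complement criterion the block matrix is positive semidefinite exactly when
`t • X + (C - Bᴴ * Y⁻¹ * B)` is. In any C⋆-algebra a strictly positive `a` dominates some
`r • 1` with `r > 0`, and a self-adjoint `b` dominates `-‖b‖ • 1`, so `t = (‖b‖ + 1) / r`
makes `t • a + b` nonnegative.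
-/

open Matrix
open scoped ComplexOrder

section CStarAlgebra

variable {A : Type*} [CStarAlgebra A] [PartialOrder A] [StarOrderedRing A]

theorem IsStrictlyPositive.exists_pos_smul_add_nonneg {a b : A} (ha : IsStrictlyPositive a)
    (hb : IsSelfAdjoint b) : ∃ t : ℝ, 0 < t ∧ 0 ≤ t • a + b := by
  rcases subsingleton_or_nontrivial A with _ | _
  · exact ⟨1, one_pos, (Subsingleton.elim _ _).le⟩
  obtain ⟨r, hr, hra⟩ : ∃ r > 0, algebraMap ℝ A r ≤ a :=
    (CFC.exists_pos_algebraMap_le_iff ha.isSelfAdjoint).2 fun x hx ↦ ha.spectrum_pos hx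
  set t := (‖b‖ + 1) / r
  have hnorm : algebraMap ℝ A ‖b‖ ≤ t • a :=
    calc algebraMap ℝ A ‖b‖ ≤ algebraMap ℝ A (t * r) :=
          algebraMap_mono A (show ‖b‖ ≤ t * r by rw [div_mul_cancel₀ _ hr.ne']; linarith)
      _ = t • algebraMap ℝ A r := by rw [map_mul, Algebra.smul_def]
      _ ≤ t • a := smul_le_smul_of_nonneg_left hra (by positivity)
  refine ⟨t, by positivity, ?_⟩
  calc 0 ≤ algebraMap ℝ A ‖b‖ + b := neg_le_iff_add_nonneg'.mp hb.neg_algebraMap_norm_le_self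
    _ ≤ t • a + b := add_le_add_left hnorm b

end CStarAlgebra

open scoped MatrixOrder Matrix.Norms.L2Operator in
theorem Matrix.PosDef.exists_pos_smul_add_posSemidef {n : Type*} [Fintype n] [DecidableEq n]
    {X M : Matrix n n ℂ} (hX : X.PosDef) (hM : M.IsHermitian) :
    ∃ t : ℝ, 0 < t ∧ (t • X + M).PosSemidef := by
  simpa only [nonneg_iff_posSemidef] using
    hX.isStrictlyPositive.exists_pos_smul_add_nonneg hM.isSelfAdjoint

theorem exists_t_block_psd
    {β γ : Type*} [Fintype β] [Fintype γ] [DecidableEq β] [DecidableEq γ]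
    (Y : Matrix β β ℂ) (hY : Y.PosDef)
    (X : Matrix γ γ ℂ) (hX : X.PosDef)
    (B : Matrix β γ ℂ) (C : Matrix γ γ ℂ) (hC : C.IsHermitian) :
    ∃ t : ℝ, 0 < t ∧ (Matrix.fromBlocks Y B Bᴴ (t • X + C)).PosSemidef := by
  have := hY.isUnit.invertible
  obtain ⟨t, ht, hschur⟩ := hX.exists_pos_smul_add_posSemidef
    (hC.sub (isHermitian_conjTranspose_mul_mul B hY.1.inv))
  exact ⟨t, ht, (hY.fromBlocks₁₁ B _).2 (by rwa [add_sub_assoc])⟩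
end
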